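/- (Anisotropic Sobolev inequality.) There is a constant C > 0 such that for every u ∈ H¹₀(Ω) with ∂ₓ∂_z u ∈ L²(Ω), where Ω = [0,L] × [0,1] (periodic in x), one has ‖u‖_{L^∞(Ω)} ≤ C ( ‖u‖_{L²}^{1/2} ‖∂_z u‖_{L²}^{1/2} + ‖∂_z u‖_{L²}^{1/2} ‖∂ₓ u‖_{L²}^{1/2} + ‖u‖_{L²}^{1/2} ‖∂ₓ∂_z u‖_{L²}^{1/2} ). -/

import Mathlib

/-!
Since `u(x,0) = 0`, integrating `∂_z (u²)` in `z` gives `u(x,z)² ≤ 2 ∫₀¹ |u ∂_z u|(x,t) dt`.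
For each height `t`, the one-dimensional bound `|g(x)| ≤ L⁻¹ ∫₀ᴸ |g| + ∫₀ᴸ |∂ₓ g|` applied to
`g = u ∂_z u` and integrated in `t` bounds this by `L⁻¹ ∫_Ω |u ∂_z u| + ∫_Ω |∂ₓ(u ∂_z u)|`, and
Cauchy–Schwarz turns the right side into
`L⁻¹ ‖u‖ ‖∂_z u‖ + ‖∂ₓ u‖ ‖∂_z u‖ + ‖u‖ ‖∂ₓ∂_z u‖`. Taking square roots gives the claim.
-/

open MeasureTheory

/-- The `L²` norm over `Ω = [0,L] × [0,1]` (coordinates `(x,z)`). -/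
noncomputable def l2NormOn (L : ℝ) (f : ℝ × ℝ → ℝ) : ℝ :=
  (∫ p in Set.Icc (0 : ℝ) L ×ˢ Set.Icc (0 : ℝ) 1, f p ^ 2) ^ ((1 : ℝ) / 2)

open Set

theorem abs_intervalIntegral_le_integral_abs_of_mem_Icc {f : ℝ → ℝ} {a b x y : ℝ}
    (hf : Continuous f) (hx : x ∈ Icc a b) (hy : y ∈ Icc a b) :
    |∫ t in x..y, f t| ≤ ∫ t in a..b, |f t| := by
  have hsub : uIoc x y ⊆ uIoc a b := uIoc_subset_uIoc_of_uIcc_subset_uIcc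
    (uIcc_subset_uIcc (Icc_subset_uIcc hx) (Icc_subset_uIcc hy))
  calc |∫ t in x..y, f t| ≤ |(∫ t in x..y, |f t|)| :=
        intervalIntegral.norm_integral_le_abs_integral_norm (f := f)
    _ ≤ |(∫ t in a..b, |f t|)| := intervalIntegral.abs_integral_mono_interval hsub
        (Filter.Eventually.of_forall fun t => abs_nonneg (f t)) (hf.abs.intervalIntegrable a b)
    _ = ∫ t in a..b, |f t| := abs_of_nonneg
        (intervalIntegral.integral_nonneg (hx.1.trans hx.2) fun t _ => abs_nonneg (f t))

theorem abs_le_average_add_integral_abs_deriv {f f' : ℝ → ℝ} {a b x : ℝ} (hab : a < b)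
    (hf : ∀ y, HasDerivAt f (f' y) y) (hf' : Continuous f') (hx : x ∈ Icc a b) :
    |f x| ≤ (b - a)⁻¹ * (∫ y in a..b, |f y|) + ∫ y in a..b, |f' y| := by
  set K := ∫ y in a..b, |f' y|
  have hfc : Continuous f := continuous_iff_continuousAt.2 fun y => (hf y).continuousAt
  have hpt : ∀ y ∈ Icc a b, |f x| ≤ |f y| + K := by
    intro y hy
    have hK : |f x - f y| ≤ K := by
      rw [← intervalIntegral.integral_eq_sub_of_hasDerivAt (fun t _ => hf t)
        (hf'.intervalIntegrable _ _)]
      exact abs_intervalIntegral_le_integral_abs_of_mem_Icc hf' hy hx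
    linarith [abs_sub_abs_le_abs_sub (f x) (f y)]
  have hba : 0 < b - a := sub_pos.2 hab
  calc |f x| = (b - a)⁻¹ * ∫ _ in a..b, |f x| := by
        rw [intervalIntegral.integral_const, smul_eq_mul, inv_mul_cancel_left₀ hba.ne']
    _ ≤ (b - a)⁻¹ * ∫ y in a..b, (|f y| + K) := by
        gcongr
        exact intervalIntegral.integral_mono_on hab.le intervalIntegrable_const
          ((hfc.abs.intervalIntegrable a b).add intervalIntegrable_const) hpt
    _ = (b - a)⁻¹ * (∫ y in a..b, |f y|) + K := by
        rw [intervalIntegral.integral_add (hfc.abs.intervalIntegrable a b) intervalIntegrable_const,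
          intervalIntegral.integral_const, smul_eq_mul, mul_add, inv_mul_cancel_left₀ hba.ne']

theorem sq_le_two_mul_integral_abs_mul_deriv {f f' : ℝ → ℝ} {a b z : ℝ}
    (hf : ∀ t, HasDerivAt f (f' t) t) (hf' : Continuous f') (ha : f a = 0) (hz : z ∈ Icc a b) :
    f z ^ 2 ≤ 2 * ∫ t in a..b, |f t * f' t| := by
  have hfc : Continuous f := continuous_iff_continuousAt.2 fun y => (hf y).continuousAt
  have hsq : ∀ t, HasDerivAt (fun s => f s ^ 2) (2 * (f t * f' t)) t := fun t => by
    simpa [mul_comm, mul_assoc, mul_left_comm] using (hf t).fun_pow 2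
  have hint : f z ^ 2 = ∫ t in a..z, 2 * (f t * f' t) := by
    rw [intervalIntegral.integral_eq_sub_of_hasDerivAt (fun t _ => hsq t)
      ((continuous_const.mul (hfc.mul hf')).intervalIntegrable _ _), ha]
    ring
  calc f z ^ 2 ≤ |∫ t in a..z, 2 * (f t * f' t)| := hint ▸ le_abs_self _
    _ ≤ ∫ t in a..b, |2 * (f t * f' t)| := abs_intervalIntegral_le_integral_abs_of_mem_Icc
        (continuous_const.mul (hfc.mul hf')) ⟨le_rfl, hz.1.trans hz.2⟩ hz
    _ = 2 * ∫ t in a..b, |f t * f' t| := by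
        simp only [abs_mul, abs_two, intervalIntegral.integral_const_mul]

theorem intervalIntegral_intervalIntegral_eq_setIntegral_Icc_prod {E : Type*}
    [NormedAddCommGroup E] [NormedSpace ℝ E] {F : ℝ × ℝ → E} (hF : Continuous F)
    {a b c d : ℝ} (hab : a ≤ b) (hcd : c ≤ d) :
    ∫ t in c..d, ∫ y in a..b, F (y, t) = ∫ p in Icc a b ×ˢ Icc c d, F p := by
  have hInt : IntegrableOn F (Icc a b ×ˢ Icc c d) :=
    hF.continuousOn.integrableOn_compact (isCompact_Icc.prod isCompact_Icc)
  rw [Measure.volume_eq_prod, setIntegral_prod F hInt]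
  simp only [integral_Icc_eq_integral_Ioc, ← intervalIntegral.integral_of_le hab,
    ← intervalIntegral.integral_of_le hcd]
  refine (intervalIntegral_intervalIntegral_swap (F := fun y t => F (y, t)) ?_).symm
  rw [uIoc_of_le hab, uIoc_of_le hcd]
  exact hInt.mono_set (prod_mono Ioc_subset_Icc_self Ioc_subset_Icc_self)

theorem integral_abs_slice_le {g g' : ℝ × ℝ → ℝ} {a b c d x : ℝ} (hab : a < b) (hcd : c ≤ d)
    (hg : ∀ y t, HasDerivAt (fun s => g (s, t)) (g' (y, t)) y) (hgc : Continuous g)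
    (hg'c : Continuous g') (hx : x ∈ Icc a b) :
    ∫ t in c..d, |g (x, t)| ≤
      (b - a)⁻¹ * (∫ p in Icc a b ×ˢ Icc c d, |g p|) + ∫ p in Icc a b ×ˢ Icc c d, |g' p| := by
  rw [← intervalIntegral_intervalIntegral_eq_setIntegral_Icc_prod hgc.abs hab.le hcd,
    ← intervalIntegral_intervalIntegral_eq_setIntegral_Icc_prod hg'c.abs hab.le hcd,
    ← intervalIntegral.integral_const_mul,
    ← intervalIntegral.integral_add (by apply Continuous.intervalIntegrable; fun_prop)
      (by apply Continuous.intervalIntegrable; fun_prop)]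
  exact intervalIntegral.integral_mono_on hcd
    (by apply Continuous.intervalIntegrable; fun_prop)
    (by apply Continuous.intervalIntegrable; fun_prop)
    fun t _ => abs_le_average_add_integral_abs_deriv hab (fun y => hg y t) (by fun_prop) hx

theorem l2NormOn_nonneg (L : ℝ) (f : ℝ × ℝ → ℝ) : 0 ≤ l2NormOn L f :=
  Real.rpow_nonneg (integral_nonneg fun _ => sq_nonneg _) _

theorem integral_abs_mul_le_l2NormOn_mul {L : ℝ} {f g : ℝ × ℝ → ℝ} (hf : Continuous f)
    (hg : Continuous g) :
    ∫ p in Icc 0 L ×ˢ Icc 0 1, |f p * g p| ≤ l2NormOn L f * l2NormOn L g := by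
  have hmemLp : ∀ h : ℝ × ℝ → ℝ, Continuous h →
      MemLp (fun p => |h p|) (ENNReal.ofReal 2) (volume.restrict (Icc 0 L ×ˢ Icc 0 1)) :=
    fun h hh => by
      rw [ENNReal.ofReal_ofNat, memLp_two_iff_integrable_sq hh.abs.aestronglyMeasurable]
      exact (hh.abs.pow 2).continuousOn.integrableOn_compact (isCompact_Icc.prod isCompact_Icc)
  have hsq : ∀ h : ℝ × ℝ → ℝ, ∫ p in Icc 0 L ×ˢ Icc 0 1, |h p| ^ (2 : ℝ) =
      ∫ p in Icc 0 L ×ˢ Icc 0 1, h p ^ 2 := fun h => by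
    simp only [Real.rpow_two, sq_abs]
  simpa only [abs_mul, hsq, l2NormOn] using integral_mul_le_Lp_mul_Lq_of_nonneg
    Real.HolderConjugate.two_two (Filter.Eventually.of_forall fun p => abs_nonneg (f p))
    (Filter.Eventually.of_forall fun p => abs_nonneg (g p)) (hmemLp f hf) (hmemLp g hg)

theorem integral_abs_mul_add_mul_le_l2NormOn {L : ℝ} {f₁ g₁ f₂ g₂ : ℝ × ℝ → ℝ}
    (hf₁ : Continuous f₁) (hg₁ : Continuous g₁) (hf₂ : Continuous f₂) (hg₂ : Continuous g₂) :
    ∫ p in Icc 0 L ×ˢ Icc 0 1, |f₁ p * g₁ p + f₂ p * g₂ p| ≤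
      l2NormOn L f₁ * l2NormOn L g₁ + l2NormOn L f₂ * l2NormOn L g₂ := by
  have hint : ∀ v : ℝ × ℝ → ℝ, Continuous v →
      IntegrableOn (fun q => |v q|) (Icc 0 L ×ˢ Icc (0 : ℝ) 1) :=
    fun v hv => hv.abs.continuousOn.integrableOn_compact (isCompact_Icc.prod isCompact_Icc)
  calc _ ≤ ∫ p in Icc 0 L ×ˢ Icc 0 1, (|f₁ p * g₁ p| + |f₂ p * g₂ p|) :=
        setIntegral_mono (hint _ ((hf₁.mul hg₁).add (hf₂.mul hg₂)))
          ((hint _ (hf₁.mul hg₁)).add (hint _ (hf₂.mul hg₂))) fun p => abs_add_le _ _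
    _ = _ := integral_add (hint _ (hf₁.mul hg₁)) (hint _ (hf₂.mul hg₂))
    _ ≤ _ := add_le_add (integral_abs_mul_le_l2NormOn_mul hf₁ hg₁)
        (integral_abs_mul_le_l2NormOn_mul hf₂ hg₂)

noncomputable def partialX (f : ℝ × ℝ → ℝ) : ℝ × ℝ → ℝ := fun q => fderiv ℝ f q (1, 0)

noncomputable def partialZ (f : ℝ × ℝ → ℝ) : ℝ × ℝ → ℝ := fun q => fderiv ℝ f q (0, 1)

section Partials

variable {f : ℝ × ℝ → ℝ}

theorem ContDiff.partialX {n : WithTop ℕ∞} (hf : ContDiff ℝ (n + 1) f) :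
    ContDiff ℝ n (partialX f) :=
  (hf.fderiv_right le_rfl).clm_apply contDiff_const

theorem ContDiff.partialZ {n : WithTop ℕ∞} (hf : ContDiff ℝ (n + 1) f) :
    ContDiff ℝ n (partialZ f) :=
  (hf.fderiv_right le_rfl).clm_apply contDiff_const

theorem DifferentiableAt.hasDerivAt_partialX {x z : ℝ} (hf : DifferentiableAt ℝ f (x, z)) :
    HasDerivAt (fun s => f (s, z)) (partialX f (x, z)) x :=
  hf.hasFDerivAt.comp_hasDerivAt x ((hasDerivAt_id x).prodMk (hasDerivAt_const x z))

theorem DifferentiableAt.hasDerivAt_partialZ {x z : ℝ} (hf : DifferentiableAt ℝ f (x, z)) :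
    HasDerivAt (fun s => f (x, s)) (partialZ f (x, z)) z :=
  hf.hasFDerivAt.comp_hasDerivAt z ((hasDerivAt_const z x).prodMk (hasDerivAt_id z))

end Partials

theorem sq_apply_le_sum_l2NormOn_mul {L : ℝ} (hL : 0 < L) {u : ℝ × ℝ → ℝ} (hu : ContDiff ℝ 2 u)
    (h0 : ∀ x, u (x, 0) = 0) {p : ℝ × ℝ} (hp : p ∈ Icc 0 L ×ˢ Icc (0 : ℝ) 1) :
    u p ^ 2 ≤ 2 * (L⁻¹ + 1) * (l2NormOn L u * l2NormOn L (partialZ u)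
      + l2NormOn L (partialZ u) * l2NormOn L (partialX u)
      + l2NormOn L u * l2NormOn L (partialX (partialZ u))) := by
  obtain ⟨x, z⟩ := p
  obtain ⟨hx, hz⟩ := hp
  have huz : ContDiff ℝ 1 (partialZ u) := hu.partialZ
  have huc : Continuous u := hu.continuous
  have huzc : Continuous (partialZ u) := huz.continuous
  have hux : Continuous (partialX u) := (hu.partialX (n := 1)).continuous
  have huxz : Continuous (partialX (partialZ u)) := (huz.partialX (n := 0)).continuous
  have hud : Differentiable ℝ u := hu.differentiable (by norm_num)
  have huzd : Differentiable ℝ (partialZ u) := huz.differentiable one_ne_zero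
  have hvertical : u (x, z) ^ 2 ≤ 2 * ∫ t in (0 : ℝ)..1, |u (x, t) * partialZ u (x, t)| :=
    sq_le_two_mul_integral_abs_mul_deriv (fun t => (hud _).hasDerivAt_partialZ) (by fun_prop)
      (h0 x) hz
  have hg'c : Continuous fun q => partialX u q * partialZ u q + u q * partialX (partialZ u) q := by
    fun_prop
  have hhorizontal := integral_abs_slice_le hL (zero_le_one' ℝ) (g := fun q => u q * partialZ u q)
    (g' := fun q => partialX u q * partialZ u q + u q * partialX (partialZ u) q)
    (fun y t => ((hud _).hasDerivAt_partialX).fun_mul ((huzd _).hasDerivAt_partialX))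
    (by fun_prop) hg'c hx
  have hg := integral_abs_mul_le_l2NormOn_mul (L := L) huc huzc
  have hg' := integral_abs_mul_add_mul_le_l2NormOn (L := L) hux huzc huc huxz
  rw [sub_zero] at hhorizontal
  calc u (x, z) ^ 2 ≤ 2 * ∫ t in (0 : ℝ)..1, |u (x, t) * partialZ u (x, t)| := hvertical
    _ ≤ _ := by
      have hA := l2NormOn_nonneg L u
      have hB := l2NormOn_nonneg L (partialZ u)
      have hL' : 0 ≤ L⁻¹ := inv_nonneg.2 hL.le
      nlinarith [mul_le_mul_of_nonneg_left hg hL', mul_nonneg hA hB,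
        mul_nonneg hL' (mul_nonneg hB (l2NormOn_nonneg L (partialX u))),
        mul_nonneg hL' (mul_nonneg hA (l2NormOn_nonneg L (partialX (partialZ u))))]

theorem abs_le_sqrt_mul_sqrt_add_sqrt_add_sqrt {v K a b c : ℝ} (hK : 0 ≤ K) (ha : 0 ≤ a)
    (hb : 0 ≤ b) (hc : 0 ≤ c) (h : v ^ 2 ≤ K * (a + b + c)) :
    |v| ≤ √K * (√a + √b + √c) := by
  refine abs_le_of_sq_le_sq (h.trans ?_) (by positivity)
  rw [mul_pow, Real.sq_sqrt hK]
  gcongr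
  nlinarith [Real.sq_sqrt ha, Real.sq_sqrt hb, Real.sq_sqrt hc, Real.sqrt_nonneg a,
    Real.sqrt_nonneg b, Real.sqrt_nonneg c]

/-- Anisotropic Sobolev inequality on `Ω = [0,L] × [0,1]`, periodic in `x`,
vanishing at `z = 0, 1`:
`‖u‖_∞ ≤ C (‖u‖^{1/2}‖∂_z u‖^{1/2} + ‖∂_z u‖^{1/2}‖∂ₓ u‖^{1/2} + ‖u‖^{1/2}‖∂ₓ∂_z u‖^{1/2})`. -/
theorem stmt6 (L : ℝ) (hL : 0 < L) :
    ∃ C > 0, ∀ u : ℝ × ℝ → ℝ, ContDiff ℝ 2 u →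
      (∀ x z : ℝ, u (x + L, z) = u (x, z)) →
      (∀ x : ℝ, u (x, 0) = 0) → (∀ x : ℝ, u (x, 1) = 0) →
      ∀ p ∈ Set.Icc (0 : ℝ) L ×ˢ Set.Icc (0 : ℝ) 1,
        |u p| ≤ C *
          (Real.sqrt (l2NormOn L u *
              l2NormOn L (fun q => fderiv ℝ u q (0, 1)))
          + Real.sqrt (l2NormOn L (fun q => fderiv ℝ u q (0, 1)) *
              l2NormOn L (fun q => fderiv ℝ u q (1, 0)))
          + Real.sqrt (l2NormOn L u *
              l2NormOn L (fun q => fderiv ℝ (fun r => fderiv ℝ u r (0, 1)) q (1, 0)))) := by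
  refine ⟨√(2 * (L⁻¹ + 1)), by positivity, fun u hu _ h0 _ p hp => ?_⟩
  have hA := l2NormOn_nonneg L u
  have hB := l2NormOn_nonneg L (partialZ u)
  exact abs_le_sqrt_mul_sqrt_add_sqrt_add_sqrt (by positivity) (mul_nonneg hA hB)
    (mul_nonneg hB (l2NormOn_nonneg L _)) (mul_nonneg hA (l2NormOn_nonneg L _))
    (sq_apply_le_sum_l2NormOn_mul hL hu h0 hp)
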